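/- arXiv:2508.05802 — 5 statements merged into one kernel-verified Lean document; each statement's English description precedes it below -/
import Mathlib

section
/- Let X be a real random variable with E[e^X] < ∞, and suppose there exist p, δ ∈ [0,1] such that for every a ∈ ℝ, P(|X - a| ≤ δ) ≤ 1 - p. Then (E[e^X])^2 ≤ e^{-c p δ^2} · E[e^{2X}] for some absolute constant c > 0 (e.g. c = 1/100 works). -/
open MeasureTheory ProbabilityTheory

/-- If a real random variable `X` with finite exponential moment fluctuates at
scale `δ` (no interval of length `2δ` has mass more than `1 - p`), then
`(E e^X)^2 ≤ e^{-c p δ²} E e^{2X}` for an absolute constant `c > 0`. -/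
theorem fluctuation_to_decay :
    ∃ c : ℝ, 0 < c ∧
      ∀ (Ω : Type) [MeasurableSpace Ω] (μ : Measure Ω) [IsProbabilityMeasure μ]
        (X : Ω → ℝ) (p δ : ℝ),
        p ∈ Set.Icc (0 : ℝ) 1 → δ ∈ Set.Icc (0 : ℝ) 1 →
        (∫⁻ ω, ENNReal.ofReal (Real.exp (X ω)) ∂μ) < ⊤ →
        (∀ a : ℝ, μ {ω | |X ω - a| ≤ δ} ≤ ENNReal.ofReal (1 - p)) →
        (∫⁻ ω, ENNReal.ofReal (Real.exp (X ω)) ∂μ) ^ 2 ≤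
          ENNReal.ofReal (Real.exp (-c * p * δ ^ 2)) *
            ∫⁻ ω, ENNReal.ofReal (Real.exp (2 * X ω)) ∂μ := by
  refine ⟨1/100, by norm_num, ?_⟩
  intro Ω _ μ _ X p δ hp hδ hfin hcon
  obtain ⟨hp0, hp1⟩ := hp
  obtain ⟨hδ0, hδ1⟩ := hδ
  set I₁ := ∫⁻ ω, ENNReal.ofReal (Real.exp (X ω)) ∂μ with hI₁
  set I₂ := ∫⁻ ω, ENNReal.ofReal (Real.exp (2 * X ω)) ∂μ with hI₂
  rcases eq_or_ne I₁ 0 with h0 | h0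
  · rw [h0]; simp
  rcases eq_or_ne I₂ ⊤ with htop | htop
  · rw [htop, ENNReal.mul_top (by simp [Real.exp_pos])]
    exact le_top
  -- normalize
  set m := I₁.toReal with hm
  have hmI : I₁ = ENNReal.ofReal m := (ENNReal.ofReal_toReal hfin.ne).symm
  have hm0 : 0 < m := ENNReal.toReal_pos h0 hfin.ne
  set a₀ := Real.log m with ha₀
  have hexpa : Real.exp a₀ = m := Real.exp_log hm0
  -- the measurable set T of measure ≥ p where |X - a₀| > δ
  set A := {ω | |X ω - a₀| ≤ δ} with hA
  set T := (toMeasurable μ A)ᶜ with hT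
  have hTmeas : MeasurableSet T := (measurableSet_toMeasurable μ A).compl
  have hTp : ENNReal.ofReal p ≤ μ T := by
    have h1 : μ (toMeasurable μ A) ≤ ENNReal.ofReal (1 - p) := by
      rw [measure_toMeasurable]; exact hcon a₀
    have h2 : μ T = 1 - μ (toMeasurable μ A) :=
      prob_compl_eq_one_sub (measurableSet_toMeasurable μ A)
    rw [h2]
    have h3 : ENNReal.ofReal p + ENNReal.ofReal (1 - p) = 1 := by
      rw [← ENNReal.ofReal_add hp0 (by linarith)]
      norm_num
    calc ENNReal.ofReal p = 1 - ENNReal.ofReal (1 - p) := by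
          rw [← h3]; simp [ENNReal.add_sub_cancel_right, ENNReal.ofReal_ne_top]
      _ ≤ 1 - μ (toMeasurable μ A) := tsub_le_tsub_left h1 1
  have hTfar : ∀ ω ∈ T, δ < |X ω - a₀| := by
    intro ω hω
    by_contra h
    exact hω (subset_toMeasurable μ A (by simpa [hA] using not_lt.mp h))
  -- pointwise lower bound on T
  have hpt : ∀ ω ∈ T, m ^ 2 * δ ^ 2 / 4 ≤ (Real.exp (X ω) - m) ^ 2 := by
    intro ω hω
    have h1 := hTfar ω hω
    have hEx := Real.exp_pos (X ω)
    rcases lt_abs.mp h1 with h | h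
    · -- X ω > a₀ + δ
      have he : Real.exp (a₀ + δ) < Real.exp (X ω) := Real.exp_lt_exp.mpr (by linarith)
      rw [Real.exp_add, hexpa] at he
      have hlb := Real.add_one_le_exp δ
      have key : m * δ / 2 ≤ Real.exp (X ω) - m := by
        nlinarith [mul_le_mul_of_nonneg_left hlb hm0.le]
      nlinarith [mul_le_mul_of_nonneg_left key (by positivity : (0:ℝ) ≤ m * δ / 2),
        mul_le_mul_of_nonneg_left key (le_trans (by positivity) key)]
    · -- X ω < a₀ - δ
      have he : Real.exp (X ω + δ) < Real.exp a₀ := Real.exp_lt_exp.mpr (by linarith)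
      rw [Real.exp_add, hexpa] at he
      have hlb := Real.add_one_le_exp δ
      have key : m * δ / 2 ≤ m - Real.exp (X ω) := by
        nlinarith [mul_le_mul_of_nonneg_left hlb hEx.le,
          mul_nonneg (mul_nonneg hm0.le hδ0) (sub_nonneg.mpr hδ1)]
      nlinarith [mul_le_mul_of_nonneg_left key (by positivity : (0:ℝ) ≤ m * δ / 2),
        mul_le_mul_of_nonneg_left key (le_trans (by positivity) key)]
  -- variance lower bound
  set V := ∫⁻ ω, ENNReal.ofReal ((Real.exp (X ω) - m) ^ 2) ∂μ with hV
  have hVlb : ENNReal.ofReal (m ^ 2 * p * δ ^ 2 / 4) ≤ V := by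
    have hind : ∀ ω, T.indicator (fun _ => ENNReal.ofReal (m ^ 2 * δ ^ 2 / 4)) ω ≤
        ENNReal.ofReal ((Real.exp (X ω) - m) ^ 2) := by
      intro ω
      by_cases hω : ω ∈ T
      · rw [Set.indicator_of_mem hω]
        exact ENNReal.ofReal_le_ofReal (hpt ω hω)
      · rw [Set.indicator_of_notMem hω]; exact zero_le
    calc ENNReal.ofReal (m ^ 2 * p * δ ^ 2 / 4)
        = ENNReal.ofReal (m ^ 2 * δ ^ 2 / 4) * ENNReal.ofReal p := by
          rw [← ENNReal.ofReal_mul (by positivity)]; ring_nf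
      _ ≤ ENNReal.ofReal (m ^ 2 * δ ^ 2 / 4) * μ T := by
          exact mul_le_mul_right hTp _
      _ = ∫⁻ ω, T.indicator (fun _ => ENNReal.ofReal (m ^ 2 * δ ^ 2 / 4)) ω ∂μ := by
          rw [lintegral_indicator_const hTmeas]
      _ ≤ V := lintegral_mono hind
  -- second moment lower bound: I₂ ≥ ofReal (m²) + V
  have hI2lb : ENNReal.ofReal (m ^ 2) + V ≤ I₂ := by
    have hptid : ∀ ω, ENNReal.ofReal (Real.exp (2 * X ω)) + ENNReal.ofReal (m ^ 2) =
        ENNReal.ofReal ((Real.exp (X ω) - m) ^ 2) + ENNReal.ofReal (2 * m) *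
          ENNReal.ofReal (Real.exp (X ω)) := by
      intro ω
      rw [← ENNReal.ofReal_mul (by positivity), ← ENNReal.ofReal_add (by positivity) (by positivity),
        ← ENNReal.ofReal_add (by positivity) (by positivity)]
      congr 1
      have : Real.exp (2 * X ω) = Real.exp (X ω) * Real.exp (X ω) := by
        rw [two_mul, Real.exp_add]
      nlinarith [this]
    have hsum : (∫⁻ ω, (ENNReal.ofReal ((Real.exp (X ω) - m) ^ 2) + ENNReal.ofReal (2 * m) *
          ENNReal.ofReal (Real.exp (X ω))) ∂μ) = I₂ + ENNReal.ofReal (m ^ 2) := by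
      rw [← lintegral_congr hptid, lintegral_add_right _ measurable_const, lintegral_const,
        measure_univ, mul_one]
    have hsup : V + ENNReal.ofReal (2 * m) * I₁ ≤ I₂ + ENNReal.ofReal (m ^ 2) := by
      rw [← hsum]
      refine le_trans (add_le_add_right (lintegral_const_mul_le _ _) _) ?_
      exact le_lintegral_add _ _
    have h2m : ENNReal.ofReal (2 * m) * I₁ = ENNReal.ofReal (m ^ 2) + ENNReal.ofReal (m ^ 2) := by
      rw [hmI, ← ENNReal.ofReal_mul (by positivity), ← ENNReal.ofReal_add (by positivity) (by positivity)]
      ring_nf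
    rw [h2m, ← add_assoc] at hsup
    have hcancel := (ENNReal.add_le_add_iff_right ENNReal.ofReal_ne_top).mp hsup
    rw [add_comm]
    exact hcancel
  -- conclude
  have hreal : m ^ 2 ≤ Real.exp (-(1/100) * p * δ ^ 2) * (m ^ 2 + m ^ 2 * p * δ ^ 2 / 4) := by
    have h1 := Real.add_one_le_exp (-(1/100) * p * δ ^ 2)
    have hs0 : 0 ≤ p * δ ^ 2 := by positivity
    have hs1 : p * δ ^ 2 ≤ 1 := by nlinarith
    have hb : (1 - (1/100) * (p * δ ^ 2)) * (m ^ 2 + m ^ 2 * p * δ ^ 2 / 4) ≤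
        Real.exp (-(1/100) * p * δ ^ 2) * (m ^ 2 + m ^ 2 * p * δ ^ 2 / 4) :=
      mul_le_mul_of_nonneg_right (by linarith) (by positivity)
    have hc : m ^ 2 ≤ (1 - (1/100) * (p * δ ^ 2)) * (m ^ 2 + m ^ 2 * p * δ ^ 2 / 4) := by
      nlinarith [mul_nonneg (mul_nonneg (sq_nonneg m) hs0) (sub_nonneg.mpr hs1),
        mul_nonneg (sq_nonneg m) hs0]
    linarith
  calc I₁ ^ 2 = ENNReal.ofReal (m ^ 2) := by
        rw [hmI, ← ENNReal.ofReal_pow hm0.le]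
    _ ≤ ENNReal.ofReal (Real.exp (-(1/100) * p * δ ^ 2) * (m ^ 2 + m ^ 2 * p * δ ^ 2 / 4)) :=
        ENNReal.ofReal_le_ofReal hreal
    _ = ENNReal.ofReal (Real.exp (-(1/100) * p * δ ^ 2)) *
        (ENNReal.ofReal (m ^ 2) + ENNReal.ofReal (m ^ 2 * p * δ ^ 2 / 4)) := by
        rw [ENNReal.ofReal_mul (Real.exp_pos _).le,
          ← ENNReal.ofReal_add (by positivity) (by positivity)]
    _ ≤ ENNReal.ofReal (Real.exp (-(1/100) * p * δ ^ 2)) * (ENNReal.ofReal (m ^ 2) + V) :=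
        mul_le_mul_right (add_le_add_right hVlb _) _
    _ ≤ ENNReal.ofReal (Real.exp (-(1/100) * p * δ ^ 2)) * I₂ :=
        mul_le_mul_right hI2lb _
end

section
/- Let N ≥ 2 and let H be the NW×NW symmetric block-tridiagonal matrix with diagonal blocks A₁,…,A_N and off-diagonal blocks B₁,…,B_{N-1} (each W×W, with A_i symmetric). Fix E ∈ ℝ and define D₁ = A₁ - E and D_{j+1} = A_{j+1} - E - B_j^* D_j^{-1} B_j for 1 ≤ j ≤ N-1. Assume H - E and all D_j are invertible. Then the (1,N) block of (H-E)^{-1} equals (-1)^{N-1} D₁^{-1} B₁ D₂^{-1} B₂ ⋯ B_{N-1} D_N^{-1}. -/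
/-!
View `H - E` as an `N × N` matrix `T` over the ring of `W × W` matrices, with blocks indexed
from `0` as in the statement. Back substitution suggests the column
`Q_j = (-1)^(N-1-j) D_j⁻¹ B_j D_{j+1}⁻¹ ⋯ B_{N-2} D_{N-1}⁻¹`, for which `D_j Q_j = -B_j Q_{j+1}`
and `D_{N-1} Q_{N-1} = 1`. In row `i` of `T Q` the recursion defining `D_i` makes the
subdiagonal and diagonal terms add up to `D_i Q_i`, which cancels against the superdiagonal term
except in the last row. So `T Q` is the last unit column, `Q` is the last block column of `T⁻¹`,
and its top block is the claimed product.
-/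

open Matrix

namespace Matrix

section BlockInverse

variable {ι : Type*} [Fintype ι] [DecidableEq ι]

theorem eq_ringInverse_apply_of_mulVec_eq_single {S : Type*} [Ring S] {T : Matrix ι ι S}
    (hT : IsUnit T) {q : ι → S} {k : ι} (hq : T *ᵥ q = Pi.single k 1) (i : ι) :
    q i = Ring.inverse T i k := by
  have hq' : q = Ring.inverse T *ᵥ Pi.single k 1 := by
    rw [← hq, mulVec_mulVec, Ring.inverse_mul_cancel _ hT, one_mulVec]
  simp [hq', mulVec_single]

theorem inv_comp {R : Type*} [CommRing R] {m : Type*} [Fintype m] [DecidableEq m]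
    {T : Matrix ι ι (Matrix m m R)} (hT : IsUnit T) :
    (comp ι ι m m R T)⁻¹ = comp ι ι m m R (Ring.inverse T) :=
  inv_eq_right_inv <| by
    rw [← compRingEquiv_apply, ← compRingEquiv_apply, ← map_mul, Ring.mul_inverse_cancel _ hT,
      map_one]

end BlockInverse

variable {R : Type*} [CommRing R] {m : Type*} [Fintype m] [DecidableEq m]

def tridiagonalBlock (a b : ℕ → Matrix m m R) (i j : ℕ) : Matrix m m R :=
  if i = j then a i else if i + 1 = j then b i else if j + 1 = i then (b j)ᵀ else 0

def blockTridiagonal (a b : ℕ → Matrix m m R) (n : ℕ) :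
    Matrix (Fin n) (Fin n) (Matrix m m R) :=
  of fun i j => tridiagonalBlock a b i j

theorem blockTridiagonal_mulVec_apply (a b q : ℕ → Matrix m m R) {n : ℕ} (i : Fin n) :
    (blockTridiagonal a b n *ᵥ fun j => q j) i =
      (if 0 < (i : ℕ) then (b (i - 1))ᵀ * q (i - 1) else 0) + a i * q i +
        if (i : ℕ) + 1 < n then b i * q (i + 1) else 0 := by
  obtain ⟨i, hi⟩ := i
  simp only [mulVec, dotProduct, blockTridiagonal, of_apply]
  rw [Fin.sum_univ_eq_sum_range (fun j => tridiagonalBlock a b i j * q j)]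
  have hsplit : ∀ j, tridiagonalBlock a b i j * q j =
      (if i = j then a i * q i else 0) + (if i + 1 = j then b i * q (i + 1) else 0) +
        if 0 < i then if i - 1 = j then (b (i - 1))ᵀ * q (i - 1) else 0 else 0 := by
    intro j
    unfold tridiagonalBlock
    split_ifs <;> first | omega | (subst_vars; simp)
  simp only [hsplit, Finset.sum_add_distrib, Finset.sum_ite_eq, Finset.mem_range, hi,
    Finset.sum_ite_irrel, Finset.sum_const_zero, if_true,
    show i - 1 < n by omega]
  abel

section SchurRecursion

variable {a b d q : ℕ → Matrix m m R} {n : ℕ}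

theorem lower_add_diagonal_eq_schur_mul (hd0 : d 0 = a 0)
    (hdrec : ∀ j, j + 1 < n → d (j + 1) = a (j + 1) - (b j)ᵀ * (d j)⁻¹ * b j)
    (hd : ∀ j < n, IsUnit (d j)) (hq : ∀ j, j + 1 < n → d j * q j = -(b j * q (j + 1)))
    {i : ℕ} (hi : i < n) :
    (if 0 < i then (b (i - 1))ᵀ * q (i - 1) else 0) + a i * q i = d i * q i := by
  cases i with
  | zero => simp [hd0]
  | succ j =>
    have hqj : q j = -((d j)⁻¹ * b j * q (j + 1)) := by
      rw [mul_assoc, ← mul_neg, ← hq j hi, nonsing_inv_mul_cancel_left _ _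
        ((isUnit_iff_isUnit_det _).mp (hd j (by omega)))]
    simp only [Nat.succ_pos, if_true, Nat.add_sub_cancel, hqj, hdrec j hi]
    noncomm_ring

theorem blockTridiagonal_mulVec_eq_single (hn : 0 < n) (hd0 : d 0 = a 0)
    (hdrec : ∀ j, j + 1 < n → d (j + 1) = a (j + 1) - (b j)ᵀ * (d j)⁻¹ * b j)
    (hd : ∀ j < n, IsUnit (d j)) (hq : ∀ j, j + 1 < n → d j * q j = -(b j * q (j + 1)))
    (hlast : d (n - 1) * q (n - 1) = 1) :
    (blockTridiagonal a b n *ᵥ fun j => q j) = Pi.single ⟨n - 1, by omega⟩ 1 := by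
  funext ⟨i, hi⟩
  rw [blockTridiagonal_mulVec_apply, lower_add_diagonal_eq_schur_mul hd0 hdrec hd hq hi,
    Pi.single_apply]
  simp only [Fin.mk.injEq]
  split_ifs with hnext hlast' hlast'
  · omega
  · rw [hq i hnext, neg_add_cancel]
  · rw [hlast', add_zero, hlast]
  · omega

end SchurRecursion

section SchurChain

/-- `schurChain d b j k = d_j⁻¹ b_j d_{j+1}⁻¹ ⋯ b_{j+k-1} d_{j+k}⁻¹`. -/
noncomputable def schurChain (d b : ℕ → Matrix m m R) (j k : ℕ) : Matrix m m R :=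
  ((List.range' j k).map fun i => (d i)⁻¹ * b i).prod * (d (j + k))⁻¹

variable (d b : ℕ → Matrix m m R)

@[simp]
theorem schurChain_zero (j : ℕ) : schurChain d b j 0 = (d j)⁻¹ := by
  simp [schurChain]

theorem schurChain_succ_left (j k : ℕ) :
    schurChain d b j (k + 1) = (d j)⁻¹ * b j * schurChain d b (j + 1) k := by
  simp only [schurChain, List.range'_succ, List.map_cons, List.prod_cons, Nat.add_right_comm j 1,
    Nat.add_assoc, mul_assoc]

theorem schurChain_succ_right (j k : ℕ) :
    schurChain d b j (k + 1) = schurChain d b j k * b (j + k) * (d (j + k + 1))⁻¹ := by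
  simp [schurChain, List.range'_concat, List.prod_append, mul_assoc, Nat.add_assoc]

theorem eq_schurChain_of_forall_eq_mul {p : ℕ → Matrix m m R} (hp0 : p 0 = (d 0)⁻¹)
    {n : ℕ} (hp : ∀ j, j + 1 < n → p (j + 1) = p j * b j * (d (j + 1))⁻¹) :
    ∀ j < n, p j = schurChain d b 0 j := by
  intro j hj
  induction j with
  | zero => simpa using hp0
  | succ j ih => rw [hp j hj, ih (by omega), schurChain_succ_right, Nat.zero_add]

noncomputable def schurColumn (n i : ℕ) : Matrix m m R :=
  (-1 : R) ^ (n - 1 - i) • schurChain d b i (n - 1 - i)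

variable {d} {n : ℕ}

theorem mul_schurColumn_last (hd : IsUnit (d (n - 1))) :
    d (n - 1) * schurColumn d b n (n - 1) = 1 := by
  simp [schurColumn, mul_nonsing_inv _ ((isUnit_iff_isUnit_det _).mp hd)]

theorem mul_schurColumn {j : ℕ} (hd : IsUnit (d j)) (hj : j + 1 < n) :
    d j * schurColumn d b n j = -(b j * schurColumn d b n (j + 1)) := by
  obtain ⟨k, hk⟩ : ∃ k, n - 1 - j = k + 1 := ⟨n - 1 - (j + 1), by omega⟩
  rw [schurColumn, schurColumn, hk, show n - 1 - (j + 1) = k by omega, schurChain_succ_left,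
    mul_smul_comm, ← mul_assoc, ← mul_assoc, mul_nonsing_inv _ ((isUnit_iff_isUnit_det _).mp hd),
    one_mul, pow_succ, mul_neg_one, neg_smul, mul_smul_comm]

end SchurChain

theorem ringInverse_blockTridiagonal_zero_last {a b d : ℕ → Matrix m m R} {n : ℕ} (hn : 0 < n)
    (hd0 : d 0 = a 0)
    (hdrec : ∀ j, j + 1 < n → d (j + 1) = a (j + 1) - (b j)ᵀ * (d j)⁻¹ * b j)
    (hd : ∀ j < n, IsUnit (d j)) (hT : IsUnit (blockTridiagonal a b n)) :
    Ring.inverse (blockTridiagonal a b n) ⟨0, hn⟩ ⟨n - 1, by omega⟩ =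
      (-1 : R) ^ (n - 1) • schurChain d b 0 (n - 1) := by
  have hcol := blockTridiagonal_mulVec_eq_single hn hd0 hdrec hd
    (fun j hj => mul_schurColumn b (hd j (by omega)) hj) (mul_schurColumn_last b (hd _ (by omega)))
  rw [← eq_ringInverse_apply_of_mulVec_eq_single hT hcol]
  simp [schurColumn]

end Matrix

/-- Schenker decomposition: for the block tridiagonal matrix `H` with diagonal
blocks `A j` and off-diagonal blocks `B j`, the `(1,N)` block of `(H - E)⁻¹`
equals `(-1)^(N-1) D₁⁻¹ B₁ D₂⁻¹ ⋯ B_{N-1} D_N⁻¹`, where the `D_j` are defined by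
the Schur-complement recursion. -/
theorem schenker_decomposition
    (N W : ℕ) (hN : 2 ≤ N) (E : ℝ)
    (A B : Fin N → Matrix (Fin W) (Fin W) ℝ)
    (H : Matrix (Fin N × Fin W) (Fin N × Fin W) ℝ)
    (hH : ∀ (i j : Fin N) (a b : Fin W),
      H (i, a) (j, b) =
        if i = j then A i a b
        else if (i : ℕ) + 1 = (j : ℕ) then B i a b
        else if (j : ℕ) + 1 = (i : ℕ) then B j b a
        else 0)
    (D : Fin N → Matrix (Fin W) (Fin W) ℝ)
    (hD0 : D ⟨0, by omega⟩ = A ⟨0, by omega⟩ - E • (1 : Matrix (Fin W) (Fin W) ℝ))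
    (hDrec : ∀ (j : ℕ) (h : j + 1 < N),
      D ⟨j + 1, h⟩ = A ⟨j + 1, h⟩ - E • (1 : Matrix (Fin W) (Fin W) ℝ)
        - (B ⟨j, by omega⟩)ᵀ * (D ⟨j, by omega⟩)⁻¹ * B ⟨j, by omega⟩)
    (hDinv : ∀ j, IsUnit (D j))
    (hHinv : IsUnit (H - E • (1 : Matrix (Fin N × Fin W) (Fin N × Fin W) ℝ)))
    (P : Fin N → Matrix (Fin W) (Fin W) ℝ)
    (hP0 : P ⟨0, by omega⟩ = (D ⟨0, by omega⟩)⁻¹)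
    (hPrec : ∀ (j : ℕ) (h : j + 1 < N),
      P ⟨j + 1, h⟩ = P ⟨j, by omega⟩ * B ⟨j, by omega⟩ * (D ⟨j + 1, h⟩)⁻¹) :
    ∀ a b : Fin W,
      (H - E • (1 : Matrix (Fin N × Fin W) (Fin N × Fin W) ℝ))⁻¹
          (⟨0, by omega⟩, a) (⟨N - 1, by omega⟩, b) =
        ((-1 : ℝ) ^ (N - 1) • P ⟨N - 1, by omega⟩) a b := by
  intro a b
  set ofFin : (Fin N → Matrix (Fin W) (Fin W) ℝ) → ℕ → Matrix (Fin W) (Fin W) ℝ :=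
    fun F => Function.extend Fin.val F 0
  have hofFin (F : Fin N → Matrix (Fin W) (Fin W) ℝ) (j : ℕ) (h : j < N) :
      ofFin F j = F ⟨j, h⟩ :=
    Fin.val_injective.extend_apply F 0 ⟨j, h⟩
  set T := blockTridiagonal (fun j => ofFin A j - E • 1) (ofFin B) N
  have hblocks : H - E • 1 = comp _ _ _ _ ℝ T := by
    ext ⟨i, u⟩ ⟨j, v⟩
    simp only [Matrix.sub_apply, hH, Matrix.smul_apply, one_apply, comp_apply, T,
      blockTridiagonal, tridiagonalBlock, of_apply, hofFin _ _ i.isLt, hofFin _ _ j.isLt,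
      Fin.val_inj, Prod.mk.injEq]
    split_ifs <;> simp_all
  have hT : IsUnit T := by rwa [hblocks, isUnit_comp_iff] at hHinv
  have hcorner := ringInverse_blockTridiagonal_zero_last (d := ofFin D) (by omega)
    (by rw [hofFin _ _ (by omega), hofFin _ _ (by omega), hD0])
    (fun j hj => by
      rw [hofFin _ _ hj, hofFin _ _ hj, hofFin _ _ (by omega), hofFin _ _ (by omega), hDrec])
    (fun j hj => by rw [hofFin _ _ hj]; exact hDinv _) hT
  have hP := eq_schurChain_of_forall_eq_mul (ofFin D) (ofFin B) (p := ofFin P)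
    (by rw [hofFin _ _ (by omega), hofFin _ _ (by omega), hP0])
    (fun j hj => by
      rw [hofFin _ _ hj, hofFin _ _ hj, hofFin _ _ (by omega), hofFin _ _ (by omega), hPrec])
    (N - 1) (by omega)
  rw [hblocks, inv_comp hT, comp_apply, hcorner, ← hP, hofFin _ _ (by omega)]
end

section
/- With notation as in the Schenker decomposition: let H be block tridiagonal with blocks A_j, B_j, fix E, define D_j recursively by D₁ = A₁ - E, D_{j+1} = A_{j+1} - E - B_j^* D_j^{-1} B_j (all D_j invertible), and for a unit vector w define v_N = w and v_j = D_{j+1}^{-1}B_{j+1}⋯D_N^{-1}w / ‖D_{j+1}^{-1}B_{j+1}⋯D_N^{-1}w‖ for 1 ≤ j ≤ N-1 (assuming these vectors are nonzero). Fix j ∈ [2, N-1] and suppose ‖A_j‖_op ≤ 10 and ‖B_j‖_op ≤ 10. Then either ‖B_j^* D_j^{-1} B_j v_j‖ ≤ 100, or ‖B_{j-1}^* D_{j-1}^{-1} B_{j-1} v_{j-1}‖ ≤ 100 + |E|. -/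
/-
Put `y = D_j⁻¹ B_j u` and `n = ‖y‖`. Since `‖B_jᵀ‖_op = ‖B_j‖_op ≤ 10`, the first alternative
failing means `100 < ‖B_jᵀ y‖ ≤ 10 n`, so `n > 10`. The recursion gives
`B_{j-1}ᵀ D_{j-1}⁻¹ B_{j-1} = A_j - E - D_j`, and `D_j v' = n⁻¹ B_j u` has norm at most `10 / n ≤ 1`
for the unit vector `v' = y / n`, whence the bound `10 + |E| + 1`.
-/

open Matrix

noncomputable def euclNorm {W : ℕ} (x : Fin W → ℝ) : ℝ :=
  Real.sqrt (∑ i, x i ^ 2)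

namespace EuclNorm

variable {W : ℕ}

theorem eq_norm_toLp (x : Fin W → ℝ) : euclNorm x = ‖WithLp.toLp 2 x‖ := by
  simp [euclNorm, EuclideanSpace.norm_eq, sq_abs]

theorem nonneg (x : Fin W → ℝ) : 0 ≤ euclNorm x :=
  Real.sqrt_nonneg _

theorem smul (c : ℝ) (x : Fin W → ℝ) : euclNorm (c • x) = |c| * euclNorm x := by
  rw [eq_norm_toLp, eq_norm_toLp, WithLp.toLp_smul, norm_smul, Real.norm_eq_abs]

theorem sub_le (x y : Fin W → ℝ) : euclNorm (x - y) ≤ euclNorm x + euclNorm y := by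
  simpa only [eq_norm_toLp, WithLp.toLp_sub] using norm_sub_le _ _

theorem inv_smul_self {x : Fin W → ℝ} (hx : euclNorm x ≠ 0) :
    euclNorm ((euclNorm x)⁻¹ • x) = 1 := by
  rw [smul, abs_inv, abs_of_nonneg (nonneg x), inv_mul_cancel₀ hx]

theorem dotProduct_le (x y : Fin W → ℝ) : x ⬝ᵥ y ≤ euclNorm x * euclNorm y := by
  simpa [eq_norm_toLp, EuclideanSpace.inner_eq_star_dotProduct, dotProduct_comm x]
    using real_inner_le_norm (WithLp.toLp 2 x) (WithLp.toLp 2 y)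

theorem transpose_mulVec_le {A : Matrix (Fin W) (Fin W) ℝ} {C : ℝ}
    (hA : ∀ x, euclNorm (A *ᵥ x) ≤ C * euclNorm x) (y : Fin W → ℝ) :
    euclNorm (Aᵀ *ᵥ y) ≤ C * euclNorm y := by
  set z := Aᵀ *ᵥ y
  have hsq : euclNorm z * euclNorm z ≤ (C * euclNorm y) * euclNorm z :=
    calc euclNorm z * euclNorm z = z ⬝ᵥ z := by
          rw [euclNorm, Real.mul_self_sqrt (by positivity)]; simp [dotProduct, sq]
      _ = y ᵥ* A ⬝ᵥ z := by rw [← mulVec_transpose]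
      _ = y ⬝ᵥ A *ᵥ z := (dotProduct_mulVec _ _ _).symm
      _ ≤ euclNorm y * euclNorm (A *ᵥ z) := dotProduct_le _ _
      _ ≤ euclNorm y * (C * euclNorm z) := by gcongr; exacts [nonneg y, hA z]
      _ = (C * euclNorm y) * euclNorm z := by ring
  rcases (nonneg z).eq_or_lt with hz | hz
  · rw [← hz]
    linarith [hA y, nonneg (A *ᵥ y)]
  · exact le_of_mul_le_mul_right hsq hz

theorem sub_smul_one_sub_mulVec_le (A D : Matrix (Fin W) (Fin W) ℝ) (E : ℝ) (v : Fin W → ℝ) :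
    euclNorm ((A - E • (1 : Matrix (Fin W) (Fin W) ℝ) - D) *ᵥ v)
      ≤ euclNorm (A *ᵥ v) + |E| * euclNorm v + euclNorm (D *ᵥ v) := by
  rw [sub_mulVec, sub_mulVec, smul_mulVec, one_mulVec, ← smul E v]
  linarith [sub_le (A *ᵥ v - E • v) (D *ᵥ v), sub_le (A *ᵥ v) (E • v)]

end EuclNorm

open EuclNorm in
theorem either_or_bound_general
    (W : ℕ) (E : ℝ)
    (Aj Bj Dj Bprev Dprev : Matrix (Fin W) (Fin W) ℝ)
    (u vprev : Fin W → ℝ)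
    (hu : euclNorm u = 1)
    (hAop : ∀ x : Fin W → ℝ, euclNorm (Aj.mulVec x) ≤ 10 * euclNorm x)
    (hBop : ∀ x : Fin W → ℝ, euclNorm (Bj.mulVec x) ≤ 10 * euclNorm x)
    (hDjinv : IsUnit Dj)
    (hrec : Dj = Aj - E • (1 : Matrix (Fin W) (Fin W) ℝ) - Bprevᵀ * Dprev⁻¹ * Bprev)
    (hvprev : vprev =
      (euclNorm (Dj⁻¹.mulVec (Bj.mulVec u)))⁻¹ • Dj⁻¹.mulVec (Bj.mulVec u)) :
    euclNorm ((Bjᵀ * Dj⁻¹ * Bj).mulVec u) ≤ 100 ∨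
      euclNorm ((Bprevᵀ * Dprev⁻¹ * Bprev).mulVec vprev) ≤ 100 + |E| := by
  rw [or_iff_not_imp_left, not_le]
  intro hbig
  set y := Dj⁻¹ *ᵥ Bj *ᵥ u
  have hy : 10 < euclNorm y := by
    have := transpose_mulVec_le hBop y
    rw [← mulVec_mulVec, ← mulVec_mulVec] at hbig
    linarith
  have hDj_vprev : Dj *ᵥ vprev = (euclNorm y)⁻¹ • Bj *ᵥ u := by
    rw [hvprev, mulVec_smul, mulVec_mulVec, mul_nonsing_inv _ (Dj.isUnit_iff_isUnit_det.mp hDjinv),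
      one_mulVec]
  have hvprev_unit : euclNorm vprev = 1 := hvprev ▸ inv_smul_self (by linarith)
  have hDj_small : euclNorm (Dj *ᵥ vprev) ≤ 1 := by
    rw [hDj_vprev, smul, abs_inv, abs_of_pos (by linarith), inv_mul_le_iff₀ (by linarith)]
    linarith [hu ▸ hBop u]
  have hrec' : Bprevᵀ * Dprev⁻¹ * Bprev = Aj - E • (1 : Matrix (Fin W) (Fin W) ℝ) - Dj := by
    rw [hrec, sub_sub_cancel]
  have hAj_small : euclNorm (Aj *ᵥ vprev) ≤ 10 := by simpa [hvprev_unit] using hAop vprev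
  have htriangle := sub_smul_one_sub_mulVec_le Aj Dj E vprev
  rw [hvprev_unit, mul_one] at htriangle
  rw [hrec']
  linarith

/-- Either–or bound (Claim 4.2): with `v' = D_j⁻¹ B_j u / ‖D_j⁻¹ B_j u‖` the
previous direction vector, if `‖A_j‖_op ≤ 10` and `‖B_j‖_op ≤ 10`, then either
`‖B_jᵀ D_j⁻¹ B_j u‖ ≤ 100` or `‖B_{j-1}ᵀ D_{j-1}⁻¹ B_{j-1} v'‖ ≤ 100 + |E|`. -/
theorem either_or_bound
    (W : ℕ) (E : ℝ)
    (Aj Bj Dj Bprev Dprev : Matrix (Fin W) (Fin W) ℝ)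
    (u vprev : Fin W → ℝ)
    (hu : euclNorm u = 1)
    (hAop : ∀ x : Fin W → ℝ, euclNorm (Aj.mulVec x) ≤ 10 * euclNorm x)
    (hBop : ∀ x : Fin W → ℝ, euclNorm (Bj.mulVec x) ≤ 10 * euclNorm x)
    (hDjinv : IsUnit Dj)
    (hDprevinv : IsUnit Dprev)
    (hrec : Dj = Aj - E • (1 : Matrix (Fin W) (Fin W) ℝ) - Bprevᵀ * Dprev⁻¹ * Bprev)
    (hne : Dj⁻¹.mulVec (Bj.mulVec u) ≠ 0)
    (hvprev : vprev =
      (euclNorm (Dj⁻¹.mulVec (Bj.mulVec u)))⁻¹ • Dj⁻¹.mulVec (Bj.mulVec u)) :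
    euclNorm ((Bjᵀ * Dj⁻¹ * Bj).mulVec u) ≤ 100 ∨
      euclNorm ((Bprevᵀ * Dprev⁻¹ * Bprev).mulVec vprev) ≤ 100 + |E| :=
  either_or_bound_general W E Aj Bj Dj Bprev Dprev u vprev hu hAop hBop hDjinv hrec hvprev
end

section
/- Let X be an M-regular random variable, i.e. a real random variable with C² everywhere-positive density φ satisfying ‖(log φ)''‖_∞ ≤ M, E[X] = 0, E[X²] ≤ 1, E[X⁴] ≤ M. Then φ is bounded: ‖φ‖_∞ ≤ C(M) for a constant depending only on M. -/
open MeasureTheory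

/-- An `M`-regular density is bounded by a constant depending only on `M`:
if `φ` is a `C²` everywhere-positive probability density with
`‖(log φ)''‖_∞ ≤ M`, mean zero, second moment at most `1` and fourth moment at
most `M`, then `‖φ‖_∞ ≤ C(M)`. -/
theorem regular_density_bounded
    (M : ℝ) (hM : 0 < M) :
    ∃ C : ℝ, 0 < C ∧
      ∀ φ : ℝ → ℝ,
        (∀ x, 0 < φ x) →
        ContDiff ℝ 2 φ →
        (∫ x, φ x) = 1 →
        (∀ x, |deriv (deriv (fun t => Real.log (φ t))) x| ≤ M) →
        (∫ x, x * φ x) = 0 →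
        (∫ x, x ^ 2 * φ x) ≤ 1 →
        (∫ x, x ^ 4 * φ x) ≤ M →
        ∀ x, φ x ≤ C := by
  refine ⟨Real.exp (M / 2), Real.exp_pos _, ?_⟩
  intro φ hpos hC2 hint hlog _ _ _ x₀
  set f : ℝ → ℝ := fun t => Real.log (φ t) with hfdef
  have hfC2 : ContDiff ℝ 2 f := hC2.log fun x => (hpos x).ne'
  rw [show (2 : WithTop ℕ∞) = 1 + 1 by norm_num, contDiff_succ_iff_deriv] at hfC2
  have hfd : Differentiable ℝ f := hfC2.1
  have hf'd : Differentiable ℝ (deriv f) := hfC2.2.2.differentiable one_ne_zero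
  -- the auxiliary functions
  set g : ℝ → ℝ := fun y => deriv f y + M * (y - x₀) with hgdef
  have haux : ∀ y : ℝ, HasDerivAt (fun y : ℝ => M * (y - x₀)) M y := by
    intro y
    simpa using ((hasDerivAt_id y).sub_const x₀).const_mul M
  have hgdiff : Differentiable ℝ g :=
    hf'd.add ((differentiable_id.sub_const x₀).const_mul M)
  have hgderiv : ∀ y, deriv g y = deriv (deriv f) y + M := by
    intro y
    exact (((hf'd y).hasDerivAt).add (haux y)).deriv
  have hgmono : Monotone g := by
    refine monotone_of_deriv_nonneg hgdiff fun y => ?_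
    rw [hgderiv]
    linarith [(abs_le.1 (hlog y)).1]
  set h : ℝ → ℝ := fun y => f y + M / 2 * (y - x₀) ^ 2 with hhdef
  have hsq : ∀ y : ℝ, HasDerivAt (fun y : ℝ => M / 2 * (y - x₀) ^ 2) (M * (y - x₀)) y := by
    intro y
    have : HasDerivAt (fun y : ℝ => M / 2 * (y - x₀) ^ 2) _ y :=
      (((hasDerivAt_id y).sub_const x₀).fun_pow 2).const_mul (M / 2)
    convert this using 1
    simp only [id_eq]
    ring
  have hhdiff : Differentiable ℝ h := fun y => ((hfd y).hasDerivAt.add (hsq y)).differentiableAt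
  have hhderiv : ∀ y, deriv h y = g y := by
    intro y
    exact ((hfd y).hasDerivAt.add (hsq y)).deriv
  have hgx₀ : g x₀ = deriv f x₀ := by simp [hgdef]
  -- a unit interval on which `f ≥ f x₀ - M / 2`
  obtain ⟨a, hbound⟩ : ∃ a : ℝ, ∀ y ∈ Set.Icc a (a + 1), f x₀ - M / 2 ≤ f y := by
    rcases le_or_gt 0 (deriv f x₀) with h0 | h0
    · refine ⟨x₀, fun y hy => ?_⟩
      have hmono : MonotoneOn h (Set.Ici x₀) := by
        refine monotoneOn_of_deriv_nonneg (convex_Ici x₀)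
          hhdiff.continuous.continuousOn hhdiff.differentiableOn fun y hy => ?_
        rw [interior_Ici] at hy
        rw [hhderiv]
        have := hgmono (le_of_lt hy)
        rw [hgx₀] at this
        linarith
      have h1 : h x₀ ≤ h y := hmono Set.self_mem_Ici hy.1 hy.1
      have h2 : (y - x₀) ^ 2 ≤ 1 := by nlinarith [hy.1, hy.2]
      have h3 : f x₀ + M / 2 * (x₀ - x₀) ^ 2 ≤ f y + M / 2 * (y - x₀) ^ 2 := h1
      nlinarith
    · refine ⟨x₀ - 1, fun y hy => ?_⟩
      have hanti : AntitoneOn h (Set.Iic x₀) := by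
        refine antitoneOn_of_deriv_nonpos (convex_Iic x₀)
          hhdiff.continuous.continuousOn hhdiff.differentiableOn fun y hy => ?_
        rw [interior_Iic] at hy
        rw [hhderiv]
        have := hgmono (le_of_lt hy)
        rw [hgx₀] at this
        linarith
      have hy2 : y ≤ x₀ := by linarith [hy.2]
      have h1 : h x₀ ≤ h y := hanti (Set.mem_Iic.2 hy2) Set.self_mem_Iic hy2
      have h2 : (y - x₀) ^ 2 ≤ 1 := by nlinarith [hy.1, hy.2]
      have h3 : f x₀ + M / 2 * (x₀ - x₀) ^ 2 ≤ f y + M / 2 * (y - x₀) ^ 2 := h1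
      nlinarith
  -- pointwise lower bound for φ on the interval
  have hφbound : ∀ y ∈ Set.Icc a (a + 1), φ x₀ * Real.exp (-(M / 2)) ≤ φ y := by
    intro y hy
    have h1 : Real.exp (f x₀ - M / 2) ≤ Real.exp (f y) := Real.exp_le_exp.2 (hbound y hy)
    rw [Real.exp_sub] at h1
    have h2 : Real.exp (f y) = φ y := Real.exp_log (hpos y)
    have h3 : Real.exp (f x₀) = φ x₀ := Real.exp_log (hpos x₀)
    rw [h2, h3] at h1
    rw [Real.exp_neg]
    calc φ x₀ * (Real.exp (M / 2))⁻¹ = φ x₀ / Real.exp (M / 2) := by ring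
    _ ≤ φ y := h1
  -- integrability
  have hintg : Integrable φ volume := by
    by_contra hc
    rw [integral_undef hc] at hint
    norm_num at hint
  -- integral comparison
  have hvol : (volume (Set.Icc a (a + 1))).toReal = 1 := by
    rw [Real.volume_Icc]
    norm_num
  have key : φ x₀ * Real.exp (-(M / 2)) * 1 ≤ 1 := by
    calc φ x₀ * Real.exp (-(M / 2)) * 1
        = φ x₀ * Real.exp (-(M / 2)) * (volume (Set.Icc a (a + 1))).toReal := by rw [hvol]
      _ ≤ ∫ y in Set.Icc a (a + 1), φ y :=
          by have := setIntegral_ge_of_const_le measurableSet_Icc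
              (by rw [Real.volume_Icc]; exact ENNReal.ofReal_ne_top) hφbound hintg.integrableOn
             rwa [smul_eq_mul, mul_comm, measureReal_def] at this
      _ ≤ ∫ y, φ y := setIntegral_le_integral hintg
            (Filter.Eventually.of_forall fun y => (hpos y).le)
      _ = 1 := hint
  have hexp : Real.exp (-(M / 2)) * Real.exp (M / 2) = 1 := by
    rw [← Real.exp_add]; simp
  nlinarith [Real.exp_pos (M / 2), Real.exp_pos (-(M / 2)), (hpos x₀).le]
end

section
/- Let h : ℝ → ℝ be C² with ‖h''‖_∞ ≤ M and ∫ e^{-h} = 1, and suppose h'(x)e^{-h(x)} → 0 and h'(x)³e^{-h(x)} → 0 as |x| → ∞. Then ∫ h'(x)⁴ e^{-h(x)} dx = 3∫ h'(x)² h''(x) e^{-h(x)} dx ≤ 3M². -/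
open MeasureTheory

/-- Integration by parts identity for the fourth moment of the score:
`∫ h'⁴ e^{-h} = 3 ∫ h'² h'' e^{-h} ≤ 3M²`. -/
theorem score_fourth_moment_ibp
    (M : ℝ) (h : ℝ → ℝ)
    (hC2 : ContDiff ℝ 2 h)
    (hM : ∀ x, |deriv (deriv h) x| ≤ M)
    (hdens : ∫ x, Real.exp (-h x) = 1)
    (hb1 : Filter.Tendsto (fun x => deriv h x * Real.exp (-h x)) Filter.atTop (nhds 0))
    (hb1' : Filter.Tendsto (fun x => deriv h x * Real.exp (-h x)) Filter.atBot (nhds 0))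
    (hb3 : Filter.Tendsto (fun x => (deriv h x) ^ 3 * Real.exp (-h x)) Filter.atTop (nhds 0))
    (hb3' : Filter.Tendsto (fun x => (deriv h x) ^ 3 * Real.exp (-h x)) Filter.atBot (nhds 0))
    (hi2 : Integrable (fun x => (deriv h x) ^ 2 * Real.exp (-h x)))
    (hi4 : Integrable (fun x => (deriv h x) ^ 4 * Real.exp (-h x)))
    (hi22 : Integrable (fun x => (deriv h x) ^ 2 * deriv (deriv h) x * Real.exp (-h x))) :
    (∫ x, (deriv h x) ^ 4 * Real.exp (-h x)) =
        3 * ∫ x, (deriv h x) ^ 2 * deriv (deriv h) x * Real.exp (-h x) ∧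
    (∫ x, (deriv h x) ^ 4 * Real.exp (-h x)) ≤ 3 * M ^ 2 := by
  have hM0 : 0 ≤ M := le_trans (abs_nonneg _) (hM 0)
  -- differentiability facts
  have hdiff : Differentiable ℝ h := hC2.differentiable (by norm_num)
  have hC1' : ContDiff ℝ 1 (deriv h) := by
    have := (contDiff_succ_iff_deriv (n := 1)).mp (by exact_mod_cast hC2)
    exact this.2.2
  have hdiff' : Differentiable ℝ (deriv h) := hC1'.differentiable (by norm_num)
  have hh1 : ∀ x, HasDerivAt h (deriv h x) x := fun x => (hdiff x).hasDerivAt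
  have hh2 : ∀ x, HasDerivAt (deriv h) (deriv (deriv h) x) x :=
    fun x => (hdiff' x).hasDerivAt
  have hexpD : ∀ x, HasDerivAt (fun y => Real.exp (-h y))
      (Real.exp (-h x) * (-deriv h x)) x := by
    intro x
    exact ((hh1 x).neg).exp
  have hcont'' : Continuous (deriv (deriv h)) := by
    have := (contDiff_succ_iff_deriv (n := 0)).mp hC1'
    exact this.2.2.continuous
  have hcontexp : Continuous (fun x => Real.exp (-h x)) :=
    Real.continuous_exp.comp (hdiff.continuous.neg)
  -- integrability of exp(-h)
  have hexpint : Integrable (fun x => Real.exp (-h x)) := by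
    by_contra hc
    rw [integral_undef hc] at hdens
    norm_num at hdens
  have hint'' : Integrable (fun x => deriv (deriv h) x * Real.exp (-h x)) := by
    refine Integrable.mono' (hexpint.const_mul M)
      ((hcont''.mul hcontexp).aestronglyMeasurable) ?_
    filter_upwards with x
    rw [Real.norm_eq_abs, abs_mul, abs_of_nonneg (Real.exp_pos _).le]
    exact mul_le_mul_of_nonneg_right (hM x) (Real.exp_pos _).le
  -- IBP 1: ∫ h'² e^{-h} = ∫ h'' e^{-h}
  have ibp1 : ∫ x, (deriv h x) ^ 2 * Real.exp (-h x)
      = ∫ x, deriv (deriv h) x * Real.exp (-h x) := by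
    have hF : ∀ x, HasDerivAt (fun y => deriv h y * Real.exp (-h y))
        (deriv (deriv h) x * Real.exp (-h x) - (deriv h x) ^ 2 * Real.exp (-h x)) x := by
      intro x
      have := (hh2 x).mul (hexpD x)
      refine this.congr_deriv ?_
      ring
    have hFI : Integrable (fun x => deriv (deriv h) x * Real.exp (-h x)
        - (deriv h x) ^ 2 * Real.exp (-h x)) := hint''.sub hi2
    have := MeasureTheory.integral_of_hasDerivAt_of_tendsto hF hFI hb1' hb1
    rw [integral_sub hint'' hi2] at this
    linarith [this]
  -- IBP 2: ∫ h'⁴ e^{-h} = 3 ∫ h'² h'' e^{-h}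
  have ibp2 : (∫ x, (deriv h x) ^ 4 * Real.exp (-h x)) =
      3 * ∫ x, (deriv h x) ^ 2 * deriv (deriv h) x * Real.exp (-h x) := by
    have hF : ∀ x, HasDerivAt (fun y => (deriv h y) ^ 3 * Real.exp (-h y))
        (3 * ((deriv h x) ^ 2 * deriv (deriv h) x * Real.exp (-h x))
          - (deriv h x) ^ 4 * Real.exp (-h x)) x := by
      intro x
      have := ((hh2 x).pow 3).mul (hexpD x)
      refine this.congr_deriv ?_
      simp only [Pi.pow_apply]
      ring
    have hFI : Integrable (fun x => 3 * ((deriv h x) ^ 2 * deriv (deriv h) x * Real.exp (-h x))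
        - (deriv h x) ^ 4 * Real.exp (-h x)) := (hi22.const_mul 3).sub hi4
    have := MeasureTheory.integral_of_hasDerivAt_of_tendsto hF hFI hb3' hb3
    rw [integral_sub (hi22.const_mul 3) hi4, integral_const_mul] at this
    linarith [this]
  refine ⟨ibp2, ?_⟩
  -- bound ∫ h'² e^{-h} ≤ M
  have hb2 : ∫ x, (deriv h x) ^ 2 * Real.exp (-h x) ≤ M := by
    rw [ibp1]
    calc ∫ x, deriv (deriv h) x * Real.exp (-h x)
        ≤ ∫ x, M * Real.exp (-h x) := by
          refine integral_mono hint'' (hexpint.const_mul M) (fun x => ?_)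
          exact mul_le_mul_of_nonneg_right (le_trans (le_abs_self _) (hM x))
            (Real.exp_pos _).le
      _ = M := by rw [integral_const_mul, hdens, mul_one]
  have hbnd : ∫ x, (deriv h x) ^ 2 * deriv (deriv h) x * Real.exp (-h x) ≤ M ^ 2 := by
    calc ∫ x, (deriv h x) ^ 2 * deriv (deriv h) x * Real.exp (-h x)
        ≤ ∫ x, M * ((deriv h x) ^ 2 * Real.exp (-h x)) := by
          refine integral_mono hi22 (hi2.const_mul M) (fun x => ?_)
          have h1 : deriv (deriv h) x ≤ M := le_trans (le_abs_self _) (hM x)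
          have h2 : (0:ℝ) ≤ (deriv h x) ^ 2 * Real.exp (-h x) :=
            mul_nonneg (sq_nonneg _) (Real.exp_pos _).le
          nlinarith [sq_nonneg (deriv h x), (Real.exp_pos (-h x)).le]
      _ = M * ∫ x, (deriv h x) ^ 2 * Real.exp (-h x) := integral_const_mul M _
      _ ≤ M * M := mul_le_mul_of_nonneg_left hb2 hM0
      _ = M ^ 2 := (sq M).symm
  rw [ibp2]
  linarith
end
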